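/- Monotonicity: if x → y, then {t, x} ∪ {c̄} ∉ P where c̄ is a negation of the set {t, y}; i.e., the set {t, x} implies the set {t, y}. -/

import Mathlib

structure ConsistencySpace (X : Type*) [Nonempty X] where
  P : Set (Set X)
  univ_not_mem : Set.univ ∉ P
  singleton_mem : ∀ x : X, {x} ∈ P
  downward : ∀ ⦃A B : Set X⦄, A ∈ P → B ⊆ A → B ∈ P

def ConsistencySpace.Equiv {X : Type*} [Nonempty X] (C : ConsistencySpace X)
    (χ γ : Set X) : Prop :=
  ∀ κ : Set X, χ ∪ κ ∈ C.P ↔ γ ∪ κ ∈ C.P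

def ConsistencySpace.IsNegation {X : Type*} [Nonempty X] (C : ConsistencySpace X)
    (x y : X) : Prop :=
  ({x, y} : Set X) ∉ C.P ∧
  (∀ z : Set X, {x} ∪ z ∉ C.P → C.Equiv ({y} ∪ z) z) ∧
  (∀ z : Set X, {y} ∪ z ∉ C.P → C.Equiv ({x} ∪ z) z)

def ConsistencySpace.IsNegationSet {X : Type*} [Nonempty X] (C : ConsistencySpace X)
    (A : Set X) (a : X) : Prop :=
  A ∪ {a} ∉ C.P ∧
  (∀ z : Set X, A ∪ z ∉ C.P → C.Equiv ({a} ∪ z) z) ∧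
  (∀ z : Set X, {a} ∪ z ∉ C.P → C.Equiv (A ∪ z) z)

namespace ConsistencySpace

variable {X : Type*} [Nonempty X] {C : ConsistencySpace X}

theorem not_mem_P_of_subset {A B : Set X} (hA : A ∉ C.P) (hAB : A ⊆ B) : B ∉ C.P :=
  fun hB => hA (C.downward hB hAB)

theorem IsNegation.insert_mem_of_imp {y yb x : X} (hy : C.IsNegation y yb)
    (hxy : ({x, yb} : Set X) ∉ C.P) {κ : Set X} (h : insert x κ ∈ C.P) :
    insert y κ ∈ C.P := by
  have hybx : {yb} ∪ {x} ∉ C.P := not_mem_P_of_subset hxy (by simp)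
  -- the third negation axiom of `ȳ`, at `z = {x}`, gives `{y} ∪ {x} ~ {x}`
  have hyxκ : {y} ∪ {x} ∪ κ ∈ C.P := by
    rw [hy.2.2 {x} hybx κ, ← Set.insert_eq]
    exact h
  refine C.downward hyxκ fun a ha => ?_
  simp only [Set.mem_insert_iff, Set.mem_union, Set.mem_singleton_iff] at ha ⊢
  tauto

end ConsistencySpace

theorem imp_monotone {X : Type*} [Nonempty X] (C : ConsistencySpace X)
    (t x y yb cb : X) (hy : C.IsNegation y yb)
    (hc : C.IsNegationSet ({t, y} : Set X) cb)
    (hxy : ({x, yb} : Set X) ∉ C.P) :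
    ({t, x} : Set X) ∪ {cb} ∉ C.P := by
  intro h
  have hx : insert x ({t, cb} : Set X) ∈ C.P := by
    convert h using 1
    ext a
    simp only [Set.mem_insert_iff, Set.mem_union, Set.mem_singleton_iff]
    tauto
  refine hc.1 (C.downward (hy.insert_mem_of_imp hxy hx) fun a ha => ?_)
  simp only [Set.mem_insert_iff, Set.mem_union, Set.mem_singleton_iff] at ha ⊢
  tauto
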